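/- arXiv:2604.13022 — 3 statements merged into one kernel-verified Lean document; each statement's English description precedes it below -/
import Mathlib

section
/- Let d ≥ 1, let V : ℝ^d → ℝ be continuously differentiable with V(x) > 0 for all x, and let Θ, Π : ℝ → ℝ^d be differentiable curves such that Π_t ≠ 0 for all t and, for all t, Θ'(t) = 2Π_t/‖Π_t‖² and Π'(t) = −∇V(Θ_t)/V(Θ_t). Then the energy is conserved: for all t ≥ 0, ‖Π_t‖² · V(Θ_t) = ‖Π_0‖² · V(Θ_0). -/
open InnerProductSpace RealInnerProductSpace

variable {F : Type*} [NormedAddCommGroup F] [InnerProductSpace ℝ F] [CompleteSpace F]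

theorem HasGradientAt.comp_hasDerivAt {V : F → ℝ} {g : F} {γ : ℝ → F} {v : F} {t : ℝ}
    (hV : HasGradientAt V g (γ t)) (hγ : HasDerivAt γ v t) :
    HasDerivAt (fun s => V (γ s)) ⟪g, v⟫ t :=
  (hV.hasFDerivAt.comp_hasDerivAt t hγ).congr_deriv (toDual_apply_apply ..)

/-- The two product-rule terms `2⟪Π, -∇V/V⟫ V` and `‖Π‖² ⟪∇V, 2Π/‖Π‖²⟫` cancel. -/
theorem hasDerivAt_ecd_energy {V : F → ℝ} {g : F} {Θ P : ℝ → F} {t : ℝ}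
    (hV : HasGradientAt V g (Θ t)) (hVt : V (Θ t) ≠ 0) (hPt : P t ≠ 0)
    (hΘ : HasDerivAt Θ ((2 / ‖P t‖ ^ 2) • P t) t)
    (hP : HasDerivAt P (-(1 / V (Θ t)) • g) t) :
    HasDerivAt (fun s => ‖P s‖ ^ 2 * V (Θ s)) 0 t := by
  refine (hP.norm_sq.mul (hV.comp_hasDerivAt hΘ)).congr_deriv ?_
  have hnorm : ‖P t‖ ≠ 0 := norm_ne_zero_iff.mpr hPt
  rw [inner_smul_right, inner_smul_right, real_inner_comm]
  field_simp
  ring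

theorem ecd_energy_conserved_general
    (d : ℕ)
    (V : EuclideanSpace ℝ (Fin d) → ℝ)
    (hV : ContDiff ℝ 1 V)
    (hVpos : ∀ x, 0 < V x)
    (Θ P : ℝ → EuclideanSpace ℝ (Fin d))
    (hPne : ∀ t, P t ≠ 0)
    (hΘ : ∀ t, HasDerivAt Θ ((2 / ‖P t‖ ^ 2) • P t) t)
    (hP : ∀ t, HasDerivAt P (-(1 / V (Θ t)) • gradient V (Θ t)) t) :
    ∀ t, 0 ≤ t → ‖P t‖ ^ 2 * V (Θ t) = ‖P 0‖ ^ 2 * V (Θ 0) := by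
  have hE : ∀ t, HasDerivAt (fun s => ‖P s‖ ^ 2 * V (Θ s)) 0 t := fun t =>
    hasDerivAt_ecd_energy ((hV.differentiable one_ne_zero (Θ t)).hasGradientAt)
      (hVpos (Θ t)).ne' (hPne t) (hΘ t) (hP t)
  intro t _
  exact is_const_of_deriv_eq_zero (fun s => (hE s).differentiableAt) (fun s => (hE s).deriv) t 0

/-- Energy conservation for the Energy Conserving Descent (ECD) dynamics in ℝ^d:
if `Θ' = 2Π/‖Π‖²` and `Π' = −∇V(Θ)/V(Θ)` with `V` a positive C¹ potential and the
momentum `Π` (here `P`) never vanishing, then `‖Π_t‖² V(Θ_t)` is constant. -/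
theorem ecd_energy_conserved
    (d : ℕ) (hd : 1 ≤ d)
    (V : EuclideanSpace ℝ (Fin d) → ℝ)
    (hV : ContDiff ℝ 1 V)
    (hVpos : ∀ x, 0 < V x)
    (Θ P : ℝ → EuclideanSpace ℝ (Fin d))
    (hPne : ∀ t, P t ≠ 0)
    (hΘ : ∀ t, HasDerivAt Θ ((2 / ‖P t‖ ^ 2) • P t) t)
    (hP : ∀ t, HasDerivAt P (-(1 / V (Θ t)) • gradient V (Θ t)) t) :
    ∀ t, 0 ≤ t → ‖P t‖ ^ 2 * V (Θ t) = ‖P 0‖ ^ 2 * V (Θ 0) :=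
  ecd_energy_conserved_general d V hV hVpos Θ P hPne hΘ hP
end

section
/- Let λ > 0, L > 0, and let w : [0,L] → ℝ be continuous. Suppose G₊, G₋ : [0,L] → ℝ are differentiable and satisfy G₊'(x) + λ(G₋(x) − G₊(x)) = −w(x) and −G₋'(x) + λ(G₊(x) − G₋(x)) = −w(x) for all x ∈ [0,L], with boundary conditions G₋(0) = 0 and G₊(L) = 0. Then G₊(0) = (1/(1+λL)) ∫₀^L (1 + 2λ(L−x)) w(x) dx and G₋(L) = (1/(1+λL)) ∫₀^L (1 + 2λx) w(x) dx. -/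
/-!
If `(a, b)` solves `a' = -λ(a + b)`, `b' = λ(a + b)` (so that `(a, -b)` solves the adjoint
telegraph equation), then along any solution of `LG = -w` the pairing `a G₊ + b G₋` has derivative
`(b - a) w`. The affine pairs `(-(1 + λ(L - x)), λ(L - x))` and `(-λx, 1 + λx)` vanish against the
boundary conditions at one end each, so integrating over `[0, L]` isolates `(1 + λL) G₊(0)` and
`(1 + λL) G₋(L)`.
-/

open Set intervalIntegral

theorem intervalIntegral.integral_eq_sub_of_hasDerivWithinAt_Icc {E : Type*}
    [NormedAddCommGroup E] [NormedSpace ℝ E] [CompleteSpace E] {f f' : ℝ → E} {a b : ℝ}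
    (hab : a ≤ b) (hderiv : ∀ x ∈ Icc a b, HasDerivWithinAt f (f' x) (Icc a b) x)
    (hint : IntervalIntegrable f' MeasureTheory.volume a b) :
    ∫ x in a..b, f' x = f b - f a :=
  integral_eq_sub_of_hasDeriv_right_of_le hab (fun x hx => (hderiv x hx).continuousWithinAt)
    (fun x hx => (hderiv x (Ioo_subset_Icc_self hx)).mono_of_mem_nhdsWithin
      (Icc_mem_nhdsGT_of_mem ⟨hx.1.le, hx.2⟩))
    hint

theorem HasDerivWithinAt.telegraph_pairing {lam x : ℝ} {s : Set ℝ}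
    {w Gp Gm a b : ℝ → ℝ}
    (hGp : HasDerivWithinAt Gp (-w x - lam * (Gm x - Gp x)) s x)
    (hGm : HasDerivWithinAt Gm (w x + lam * (Gp x - Gm x)) s x)
    (ha : HasDerivWithinAt a (-lam * (a x + b x)) s x)
    (hb : HasDerivWithinAt b (lam * (a x + b x)) s x) :
    HasDerivWithinAt (fun y => a y * Gp y + b y * Gm y) ((b x - a x) * w x) s x :=
  ((ha.mul hGp).add (hb.mul hGm)).congr_deriv (by ring)

theorem telegraph_pairing_integral {lam l r : ℝ} (hlr : l ≤ r) {w Gp Gm a b : ℝ → ℝ}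
    (hw : ContinuousOn w (Icc l r))
    (hGp : ∀ x ∈ Icc l r, HasDerivWithinAt Gp (-w x - lam * (Gm x - Gp x)) (Icc l r) x)
    (hGm : ∀ x ∈ Icc l r, HasDerivWithinAt Gm (w x + lam * (Gp x - Gm x)) (Icc l r) x)
    (ha : ∀ x ∈ Icc l r, HasDerivWithinAt a (-lam * (a x + b x)) (Icc l r) x)
    (hb : ∀ x ∈ Icc l r, HasDerivWithinAt b (lam * (a x + b x)) (Icc l r) x) :
    ∫ x in l..r, (b x - a x) * w x = (a r * Gp r + b r * Gm r) - (a l * Gp l + b l * Gm l) := by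
  have hac : ContinuousOn a (Icc l r) := fun x hx => (ha x hx).continuousWithinAt
  have hbc : ContinuousOn b (Icc l r) := fun x hx => (hb x hx).continuousWithinAt
  exact integral_eq_sub_of_hasDerivWithinAt_Icc hlr
    (fun x hx => (hGp x hx).telegraph_pairing (hGm x hx) (ha x hx) (hb x hx))
    (((hbc.sub hac).mul hw).intervalIntegrable_of_Icc hlr)

/-- The Poisson boundary value problem for the telegraph generator on `[0,L]`:
`G₊' + λ(G₋ − G₊) = −w`, `−G₋' + λ(G₊ − G₋) = −w` with `G₋(0) = 0`, `G₊(L) = 0`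
gives `G₊(0) = q∫₀^L (1+2λ(L−x))w(x)dx` and `G₋(L) = q∫₀^L (1+2λx)w(x)dx`,
where `q = 1/(1+λL)`. -/
theorem telegraph_expected_cost
    (lam L : ℝ) (hlam : 0 < lam) (hL : 0 < L)
    (w : ℝ → ℝ) (hw : ContinuousOn w (Set.Icc 0 L))
    (Gp Gm : ℝ → ℝ)
    (hGp : ∀ x ∈ Set.Icc 0 L,
      HasDerivWithinAt Gp (-w x - lam * (Gm x - Gp x)) (Set.Icc 0 L) x)
    (hGm : ∀ x ∈ Set.Icc 0 L,
      HasDerivWithinAt Gm (w x + lam * (Gp x - Gm x)) (Set.Icc 0 L) x)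
    (hb0 : Gm 0 = 0) (hbL : Gp L = 0) :
    Gp 0 = (1 / (1 + lam * L)) * ∫ x in (0:ℝ)..L, (1 + 2 * lam * (L - x)) * w x ∧
    Gm L = (1 / (1 + lam * L)) * ∫ x in (0:ℝ)..L, (1 + 2 * lam * x) * w x := by
  have hpos : 0 < 1 + lam * L := by positivity
  have affine (c d : ℝ) (x : ℝ) :
      HasDerivWithinAt (fun y => c + d * y) d (Icc 0 L) x :=
    ((hasDerivWithinAt_id x _).const_mul d |>.const_add c).congr_deriv (mul_one d)
  have hleft : ∫ x in (0:ℝ)..L, (1 + 2 * lam * (L - x)) * w x = (1 + lam * L) * Gp 0 :=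
    calc ∫ x in (0:ℝ)..L, (1 + 2 * lam * (L - x)) * w x
        = ∫ x in (0:ℝ)..L, ((lam * L + -lam * x) - (-(1 + lam * L) + lam * x)) * w x :=
          integral_congr fun x _ => by ring
      _ = _ := telegraph_pairing_integral hL.le hw hGp hGm
          (a := fun y => -(1 + lam * L) + lam * y) (b := fun y => lam * L + -lam * y)
          (fun x _ => (affine _ _ x).congr_deriv (by ring))
          (fun x _ => (affine _ _ x).congr_deriv (by ring))
      _ = (1 + lam * L) * Gp 0 := by rw [hb0, hbL]; ring
  have hright : ∫ x in (0:ℝ)..L, (1 + 2 * lam * x) * w x = (1 + lam * L) * Gm L :=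
    calc ∫ x in (0:ℝ)..L, (1 + 2 * lam * x) * w x
        = ∫ x in (0:ℝ)..L, ((1 + lam * x) - (0 + -lam * x)) * w x :=
          integral_congr fun x _ => by ring
      _ = _ := telegraph_pairing_integral hL.le hw hGp hGm
          (a := fun y => 0 + -lam * y) (b := fun y => 1 + lam * y)
          (fun x _ => (affine _ _ x).congr_deriv (by ring))
          (fun x _ => (affine _ _ x).congr_deriv (by ring))
      _ = (1 + lam * L) * Gm L := by rw [hb0, hbL]; ring
  rw [hleft, hright, one_div, inv_mul_cancel_left₀ hpos.ne', inv_mul_cancel_left₀ hpos.ne']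
  exact ⟨rfl, rfl⟩
end

section
/- There exist constants C ≥ c > 0 and δ₀ ∈ (0,1) such that for all 0 < δ < δ₀: c·log(1/δ) ≤ ∫₁^∞ du/√(δ + (1−u²)²) ≤ C·log(1/δ). -/
/-!
Write `s = √δ`. On `[1, 2]` the factorisation `1 - u² = -(u - 1)(u + 1)` with `u + 1 ∈ [2, 3]`
sandwiches `√(δ + (1 - u²)²)` between `(s + (u - 1)) / 2` and `s + 3 (u - 1)`, and
`∫₁² du / (s + k (u - 1)) = k⁻¹ log ((s + k) / s)` is of order
`log (1 / s) = log (1 / δ) / 2`.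
On `(2, ∞)` the integrand is at most `(4/3) u⁻²`, so that part contributes a bounded amount.
-/

open MeasureTheory Real Set

theorem intervalIntegral.integral_inv_add_mul_sub {a b s k : ℝ} (hs : 0 < s) (hk : 0 < k)
    (hab : a ≤ b) :
    ∫ x in a..b, (s + k * (x - a))⁻¹ = k⁻¹ * log ((s + k * (b - a)) / s) := by
  have hshift : (fun x => (s + k * (x - a))⁻¹) = fun x => (k * x + (s - k * a))⁻¹ := by
    funext x; ring_nf
  rw [hshift, intervalIntegral.integral_comp_mul_add (fun x => x⁻¹) hk.ne',
    integral_inv_of_pos (by linarith) (by nlinarith), smul_eq_mul]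
  ring_nf

noncomputable def tailIntegrand (δ u : ℝ) : ℝ := 1 / √(δ + (1 - u ^ 2) ^ 2)

namespace tailIntegrand

variable {δ u : ℝ}

theorem nonneg : 0 ≤ tailIntegrand δ u := by
  unfold tailIntegrand; positivity

theorem continuous (hδ : 0 < δ) : Continuous (tailIntegrand δ) :=
  continuous_const.div (by fun_prop) fun u => (sqrt_pos.2 (by positivity)).ne'

theorem inv_le_of_mem_Icc (hδ : 0 < δ) (hu : u ∈ Icc (1 : ℝ) 2) :
    (√δ + 3 * (u - 1))⁻¹ ≤ tailIntegrand δ u := by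
  obtain ⟨hu1, hu2⟩ := hu
  have hs := sqrt_pos.2 hδ
  have hsq := sq_sqrt hδ.le
  have hroot : √(δ + (1 - u ^ 2) ^ 2) ≤ √δ + 3 * (u - 1) := by
    rw [sqrt_le_left (by positivity)]
    -- with `t = u - 1`: `(s + 3t)² - s² - t²(t + 2)² = 6st + t²(1 - t)(5 + t)`
    nlinarith [mul_nonneg hs.le (sub_nonneg.2 hu1),
      mul_nonneg (mul_nonneg (sq_nonneg (u - 1)) (by linarith : (0 : ℝ) ≤ 2 - u))
        (by linarith : (0 : ℝ) ≤ 4 + u)]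
  rw [tailIntegrand, one_div]
  exact inv_anti₀ (sqrt_pos.2 (by positivity)) hroot

theorem le_of_one_le (hδ : 0 < δ) (hu : 1 ≤ u) :
    tailIntegrand δ u ≤ 2 * (√δ + (u - 1))⁻¹ := by
  have hs := sqrt_pos.2 hδ
  have hsq := sq_sqrt hδ.le
  have hroot : (√δ + (u - 1)) / 2 ≤ √(δ + (1 - u ^ 2) ^ 2) := by
    rw [le_sqrt (by positivity) (by positivity)]
    nlinarith [sq_nonneg (√δ - (u - 1)),
      mul_nonneg (mul_nonneg (sq_nonneg (u - 1)) (by linarith : (0 : ℝ) ≤ u))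
        (by linarith : (0 : ℝ) ≤ u + 2)]
  calc tailIntegrand δ u ≤ ((√δ + (u - 1)) / 2)⁻¹ := by
        rw [tailIntegrand, one_div]; exact inv_anti₀ (by positivity) hroot
    _ = 2 * (√δ + (u - 1))⁻¹ := by rw [inv_div, div_eq_mul_inv]

theorem le_rpow_of_two_le (hδ : 0 ≤ δ) (hu : 2 ≤ u) :
    tailIntegrand δ u ≤ 4 / 3 * u ^ (-2 : ℝ) := by
  have hroot : 3 / 4 * u ^ 2 ≤ √(δ + (1 - u ^ 2) ^ 2) := by
    have hgap : 3 / 4 * u ^ 2 ≤ u ^ 2 - 1 := by nlinarith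
    rw [le_sqrt (by positivity) (by positivity)]
    calc (3 / 4 * u ^ 2) ^ 2 ≤ (u ^ 2 - 1) ^ 2 := pow_le_pow_left₀ (by positivity) hgap 2
      _ ≤ δ + (1 - u ^ 2) ^ 2 := by nlinarith
  calc tailIntegrand δ u ≤ (3 / 4 * u ^ 2)⁻¹ := by
        rw [tailIntegrand, one_div]; exact inv_anti₀ (by positivity) hroot
    _ = 4 / 3 * u ^ (-2 : ℝ) := by
        rw [rpow_neg (by linarith), rpow_two, mul_inv, inv_div]

theorem integrableOn_Ioi_two (hδ : 0 < δ) : IntegrableOn (tailIntegrand δ) (Ioi 2) :=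
  ((integrableOn_Ioi_rpow_of_lt (by norm_num : (-2 : ℝ) < -1) two_pos).const_mul (4 / 3)).mono'
    (continuous hδ).aestronglyMeasurable.restrict <|
    (ae_restrict_mem measurableSet_Ioi).mono fun u hu => by
      rw [norm_of_nonneg nonneg]; exact le_rpow_of_two_le hδ.le (le_of_lt hu)

theorem setIntegral_Ioi_two_le (hδ : 0 < δ) : ∫ u in Ioi 2, tailIntegrand δ u ≤ 2 / 3 := by
  have hmajorant : IntegrableOn (fun u : ℝ => 4 / 3 * u ^ (-2 : ℝ)) (Ioi 2) :=
    (integrableOn_Ioi_rpow_of_lt (by norm_num) two_pos).const_mul _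
  calc ∫ u in Ioi 2, tailIntegrand δ u ≤ ∫ u in Ioi 2, 4 / 3 * u ^ (-2 : ℝ) :=
        setIntegral_mono_on (integrableOn_Ioi_two hδ) hmajorant measurableSet_Ioi
          fun u hu => le_rpow_of_two_le hδ.le (le_of_lt hu)
    _ = 2 / 3 := by
        rw [integral_const_mul, integral_Ioi_rpow_of_lt (by norm_num) two_pos]; norm_num

theorem integral_Ioi_one_eq (hδ : 0 < δ) :
    ∫ u in Ioi 1, tailIntegrand δ u
      = (∫ u in (1 : ℝ)..2, tailIntegrand δ u) + ∫ u in Ioi 2, tailIntegrand δ u :=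
  (intervalIntegral.integral_interval_add_Ioi' ((continuous hδ).intervalIntegrable 1 2)
    (integrableOn_Ioi_two hδ)).symm

theorem mul_log_one_div_le_integral (hδ : 0 < δ) :
    1 / 6 * log (1 / δ) ≤ ∫ u in Ioi 1, tailIntegrand δ u := by
  have hs := sqrt_pos.2 hδ
  have hlog : log (1 / δ) = -2 * log √δ := by
    rw [log_sqrt hδ.le, one_div, log_inv]; ring
  have hcmp : ∫ u in (1 : ℝ)..2, (√δ + 3 * (u - 1))⁻¹
      ≤ ∫ u in (1 : ℝ)..2, tailIntegrand δ u := by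
    refine intervalIntegral.integral_mono_on one_le_two ?_
      ((continuous hδ).intervalIntegrable 1 2) fun u hu => inv_le_of_mem_Icc hδ hu
    refine ContinuousOn.intervalIntegrable (ContinuousOn.inv₀ (by fun_prop) fun u hu => ?_)
    rw [uIcc_of_le one_le_two] at hu
    linarith [hu.1]
  have hratio : log (1 / √δ) ≤ log ((√δ + 3 * (2 - 1)) / √δ) :=
    log_le_log (by positivity) (div_le_div_of_nonneg_right (by linarith) hs.le)
  rw [intervalIntegral.integral_inv_add_mul_sub hs three_pos one_le_two] at hcmp
  rw [one_div, log_inv] at hratio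
  rw [integral_Ioi_one_eq hδ]
  linarith [setIntegral_nonneg (μ := volume) measurableSet_Ioi fun u (_ : u ∈ Ioi (2 : ℝ)) =>
    (nonneg : 0 ≤ tailIntegrand δ u)]

theorem integral_le_log_one_div_add (hδ : 0 < δ) (hδ1 : δ ≤ 1) :
    ∫ u in Ioi 1, tailIntegrand δ u ≤ log (1 / δ) + 2 * log 2 + 2 / 3 := by
  have hs := sqrt_pos.2 hδ
  have hs1 : √δ ≤ 1 := sqrt_le_one.2 hδ1
  have hlog : log (1 / δ) = -2 * log √δ := by
    rw [log_sqrt hδ.le, one_div, log_inv]; ring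
  have hcmp : ∫ u in (1 : ℝ)..2, tailIntegrand δ u
      ≤ ∫ u in (1 : ℝ)..2, 2 * (√δ + 1 * (u - 1))⁻¹ := by
    refine intervalIntegral.integral_mono_on one_le_two ((continuous hδ).intervalIntegrable 1 2) ?_
      fun u hu => by rw [one_mul]; exact le_of_one_le hδ hu.1
    refine ContinuousOn.intervalIntegrable (continuousOn_const.mul
      (ContinuousOn.inv₀ (by fun_prop) fun u hu => ?_))
    rw [uIcc_of_le one_le_two] at hu
    linarith [hu.1]
  have hratio : log ((√δ + 1 * (2 - 1)) / √δ) ≤ log (2 / √δ) :=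
    log_le_log (by positivity) (div_le_div_of_nonneg_right (by linarith) hs.le)
  rw [intervalIntegral.integral_const_mul,
    intervalIntegral.integral_inv_add_mul_sub hs one_pos one_le_two] at hcmp
  rw [log_div two_ne_zero hs.ne'] at hratio
  rw [integral_Ioi_one_eq hδ]
  linarith [setIntegral_Ioi_two_le hδ]

end tailIntegrand

/-- Small-`δ` asymptotics of the tail momentum integral for the symmetric
double well: `∫₁^∞ du/√(δ + (1−u²)²) ≍ log(1/δ)` as `δ → 0⁺`. -/
theorem tail_integral_small_error_asymptotics :
    ∃ c C δ₀ : ℝ, 0 < c ∧ c ≤ C ∧ 0 < δ₀ ∧ δ₀ < 1 ∧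
      ∀ δ : ℝ, 0 < δ → δ < δ₀ →
        c * Real.log (1 / δ) ≤
            (∫ u in Set.Ioi (1:ℝ), 1 / Real.sqrt (δ + (1 - u ^ 2) ^ 2)) ∧
          (∫ u in Set.Ioi (1:ℝ), 1 / Real.sqrt (δ + (1 - u ^ 2) ^ 2)) ≤
            C * Real.log (1 / δ) := by
  refine ⟨1 / 6, 4, 1 / 3, by norm_num, by norm_num, by norm_num, by norm_num,
    fun δ hδ hδ₀ => ?_⟩
  refine ⟨tailIntegrand.mul_log_one_div_le_integral hδ, ?_⟩
  have hlog_gt_one : 1 < log (1 / δ) := by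
    rw [lt_log_iff_exp_lt (by positivity), lt_div_iff₀ hδ]
    nlinarith [exp_one_lt_d9]
  refine (tailIntegrand.integral_le_log_one_div_add hδ (by linarith)).trans ?_
  linarith [log_two_lt_d9]
end
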